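/- arXiv:2303.12228 — 2 statements merged into one kernel-verified Lean document; each statement's English description precedes it below -/
import Mathlib

section
/- Let $\{U_i\}_{i\ge 1}$ be i.i.d. uniform on $[0,1]$ and $\delta' \in (0,1)$. Then $V_n(\delta')/n^{1/2} = \frac{1}{n^{1/2}}\sum_{i=n-\lfloor\delta'n\rfloor+1}^{n} \mathbf{1}_{\{U_i \le i^{-1/2}\}}$ converges in probability to $2 - 2(1-\delta')^{1/2}$ as $n \to \infty$. -/
open MeasureTheory ProbabilityTheory Filter Topology Finset
open scoped Classical

/-!
`V n` is a sum of independent indicators of events of probability `i^(-1/2)`, so its variance is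
at most its mean. The mean is squeezed between telescoping sums of `2√i`, hence equals
`(2 - 2√(1 - δ'))√n + o(√n)`. So `Var (V n) = O(√n) = o(n)`, and Chebyshev's inequality
concentrates `V n / √n` around the limit of its mean.
-/

lemma rpow_neg_one_half_eq_inv_sqrt {x : ℝ} (hx : 0 ≤ x) : x ^ (-(1:ℝ)/2) = (√x)⁻¹ := by
  rw [neg_div, Real.rpow_neg hx, Real.sqrt_eq_rpow]

lemma inv_sqrt_add_one_le {x : ℝ} (hx : 0 ≤ x) :
    (√(x + 1))⁻¹ ≤ 2 * √(x + 1) - 2 * √x := by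
  have hs : 0 < √(x + 1) := Real.sqrt_pos.2 (by linarith)
  have hmono : √x ≤ √(x + 1) := Real.sqrt_le_sqrt (by linarith)
  have hsq : √(x + 1) ^ 2 - √x ^ 2 = 1 := by
    rw [Real.sq_sqrt (by linarith), Real.sq_sqrt hx]; ring
  rw [inv_le_iff_one_le_mul₀ hs]
  nlinarith

lemma two_sqrt_add_one_sub_le_inv_sqrt {x : ℝ} (hx : 0 < x) :
    2 * √(x + 1) - 2 * √x ≤ (√x)⁻¹ := by
  have hs : 0 < √x := Real.sqrt_pos.2 hx
  have hmono : √x ≤ √(x + 1) := Real.sqrt_le_sqrt (by linarith)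
  have hsq : √(x + 1) ^ 2 - √x ^ 2 = 1 := by
    rw [Real.sq_sqrt (by linarith), Real.sq_sqrt hx.le]; ring
  rw [← one_div, le_div_iff₀ hs]
  nlinarith

lemma Finset.sum_Ioc_eq_sum_Ico_succ {M : Type*} [AddCommMonoid M] (f : ℕ → M) (a n : ℕ) :
    ∑ i ∈ Ioc a n, f i = ∑ i ∈ Ico a n, f (i + 1) := by
  rw [← Ico_add_one_add_one_eq_Ioc, sum_Ico_add']

lemma sum_Ioc_inv_sqrt_le {a n : ℕ} (h : a ≤ n) :
    ∑ i ∈ Ioc a n, (√i)⁻¹ ≤ 2 * √n - 2 * √a := by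
  rw [sum_Ioc_eq_sum_Ico_succ, ← sum_Ico_sub (fun i : ℕ => 2 * √i) h]
  gcongr with i
  push_cast
  exact inv_sqrt_add_one_le i.cast_nonneg

lemma two_sqrt_sub_le_sum_Ioc_inv_sqrt {a n : ℕ} (h : a ≤ n) :
    2 * √(n + 1) - 2 * √(a + 1) ≤ ∑ i ∈ Ioc a n, (√i)⁻¹ := by
  rw [sum_Ioc_eq_sum_Ico_succ, ← sum_Ico_sub (fun i : ℕ => 2 * √(i + 1)) h]
  gcongr with i
  push_cast
  exact two_sqrt_add_one_sub_le_inv_sqrt (by positivity)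

theorem tendsto_sum_Ioc_inv_sqrt_div_sqrt {a : ℕ → ℕ} {c : ℝ} (ha : ∀ n, a n ≤ n)
    (hlim : Tendsto (fun n => (a n : ℝ) / n) atTop (𝓝 c)) :
    Tendsto (fun n => (∑ i ∈ Ioc (a n) n, (√i)⁻¹) / √n) atTop (𝓝 (2 - 2 * √c)) := by
  have hn : Tendsto (fun n : ℕ => (n : ℝ) / n) atTop (𝓝 1) :=
    tendsto_const_nhds.congr' <| by
      filter_upwards [eventually_ne_atTop 0] with n hn
      simp [hn]
  have hsucc {x : ℕ → ℝ} {d : ℝ} (h : Tendsto (fun n => x n / n) atTop (𝓝 d)) :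
      Tendsto (fun n => (x n + 1) / n) atTop (𝓝 d) := by
    simpa [add_div] using h.add tendsto_one_div_atTop_nhds_zero_nat
  have hlow : ∀ n : ℕ, 2 * √((n + 1) / n) - 2 * √((a n + 1) / n)
      ≤ (∑ i ∈ Ioc (a n) n, (√i)⁻¹) / √n := fun n => by
    rw [Real.sqrt_div (by positivity), Real.sqrt_div (by positivity), mul_div, mul_div,
      ← sub_div]
    exact div_le_div_of_nonneg_right (two_sqrt_sub_le_sum_Ioc_inv_sqrt (ha n)) (by positivity)
  have hup : ∀ n : ℕ, (∑ i ∈ Ioc (a n) n, (√i)⁻¹) / √n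
      ≤ 2 * √(n / n) - 2 * √(a n / n) := fun n => by
    rw [Real.sqrt_div (by positivity), Real.sqrt_div (by positivity), mul_div, mul_div,
      ← sub_div]
    exact div_le_div_of_nonneg_right (sum_Ioc_inv_sqrt_le (ha n)) (by positivity)
  refine tendsto_of_tendsto_of_tendsto_of_le_of_le ?_ ?_ hlow hup
  · simpa using ((hsucc hn).sqrt.const_mul 2).sub ((hsucc hlim).sqrt.const_mul 2)
  · simpa using (hn.sqrt.const_mul 2).sub (hlim.sqrt.const_mul 2)

lemma tendsto_sub_floor_mul_div {δ : ℝ} (h0 : 0 ≤ δ) (h1 : δ ≤ 1) :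
    Tendsto (fun n : ℕ => ((n - ⌊δ * n⌋₊ : ℕ) : ℝ) / n) atTop (𝓝 (1 - δ)) := by
  have hfloor := (tendsto_nat_floor_mul_div_atTop h0).comp (tendsto_natCast_atTop_atTop (R := ℝ))
  refine (tendsto_const_nhds.sub hfloor).congr' ?_
  filter_upwards [eventually_ne_atTop 0] with n hn
  have hle : ⌊δ * n⌋₊ ≤ n := Nat.floor_le_of_le (mul_le_of_le_one_left n.cast_nonneg h1)
  simp [Nat.cast_sub hle, sub_div, hn]

section WeakLaw

variable {Ω ι : Type*} [MeasurableSpace Ω] {μ : Measure Ω} {l : Filter ι}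
  {X : ι → Ω → ℝ} {b : ι → ℝ} {m ε : ℝ}

theorem tendsto_measure_lt_abs_div_sub_of_tendsto_variance [IsFiniteMeasure μ]
    (hX : ∀ i, MemLp (X i) 2 μ) (hb : ∀ᶠ i in l, 0 < b i)
    (hmean : Tendsto (fun i => μ[X i] / b i) l (𝓝 m))
    (hvar : Tendsto (fun i => variance (X i) μ / b i ^ 2) l (𝓝 0)) (hε : 0 < ε) :
    Tendsto (fun i => μ {ω | ε < |X i ω / b i - m|}) l (𝓝 0) := by
  have hbound : Tendsto (fun i => ENNReal.ofReal (4 / ε ^ 2 * (variance (X i) μ / b i ^ 2)))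
      l (𝓝 0) := by
    simpa using ENNReal.tendsto_ofReal (hvar.const_mul (4 / ε ^ 2))
  refine tendsto_of_tendsto_of_tendsto_of_le_of_le' tendsto_const_nhds hbound
    (Eventually.of_forall fun _ => zero_le) ?_
  filter_upwards [hb, hmean.eventually (Metric.ball_mem_nhds m (half_pos hε))]
    with i hbi hmi
  rw [Real.dist_eq] at hmi
  have hsub : {ω | ε < |X i ω / b i - m|} ⊆ {ω | ε / 2 * b i ≤ |X i ω - μ[X i]|} := by
    intro ω hω
    rw [Set.mem_ofPred_eq] at hω ⊢
    by_contra! hlt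
    have hdev : |X i ω - μ[X i]| / b i < ε / 2 := by rwa [div_lt_iff₀ hbi]
    have htri := abs_add_le ((X i ω - μ[X i]) / b i) (μ[X i] / b i - m)
    rw [show (X i ω - μ[X i]) / b i + (μ[X i] / b i - m) = X i ω / b i - m by ring, abs_div,
      abs_of_pos hbi] at htri
    linarith
  calc μ {ω | ε < |X i ω / b i - m|}
      ≤ ENNReal.ofReal (variance (X i) μ / (ε / 2 * b i) ^ 2) :=
        (measure_mono hsub).trans (meas_ge_le_variance_div_sq (hX i) (by positivity))
    _ = ENNReal.ofReal (4 / ε ^ 2 * (variance (X i) μ / b i ^ 2)) := by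
        congr 1; field_simp; ring

theorem tendsto_measure_lt_abs_div_sub_of_variance_le_integral [IsFiniteMeasure μ]
    (hX : ∀ i, MemLp (X i) 2 μ) (hb : Tendsto b l atTop)
    (hmean : Tendsto (fun i => μ[X i] / b i) l (𝓝 m))
    (hvar : ∀ i, variance (X i) μ ≤ μ[X i]) (hε : 0 < ε) :
    Tendsto (fun i => μ {ω | ε < |X i ω / b i - m|}) l (𝓝 0) := by
  have hbpos := hb.eventually_gt_atTop 0
  refine tendsto_measure_lt_abs_div_sub_of_tendsto_variance hX hbpos hmean ?_ hε
  have hupper : Tendsto (fun i => μ[X i] / b i * (b i)⁻¹) l (𝓝 0) := by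
    simpa using hmean.mul (tendsto_inv_atTop_zero.comp hb)
  refine tendsto_of_tendsto_of_tendsto_of_le_of_le' tendsto_const_nhds hupper
    (Eventually.of_forall fun i => div_nonneg (variance_nonneg _ _) (sq_nonneg _)) ?_
  filter_upwards [hbpos] with i hbi
  calc variance (X i) μ / b i ^ 2 ≤ μ[X i] / b i ^ 2 := by gcongr; exact hvar i
    _ = μ[X i] / b i * (b i)⁻¹ := by ring

end WeakLaw

section Indicators

variable {Ω : Type*} [MeasurableSpace Ω] {μ : Measure Ω}

lemma measureReal_preimage_Iic_of_map_eq_uniform {Y : Ω → ℝ} (hY : Measurable Y)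
    (hunif : μ.map Y = volume.restrict (Set.Icc 0 1)) {p : ℝ} (hp0 : 0 ≤ p) (hp1 : p ≤ 1) :
    μ.real (Y ⁻¹' Set.Iic p) = p := by
  have hinter : Set.Iic p ∩ Set.Icc 0 1 = Set.Icc 0 p := by
    ext x
    simp only [Set.mem_inter_iff, Set.mem_Iic, Set.mem_Icc]
    grind
  rw [measureReal_def, ← Measure.map_apply hY measurableSet_Iic, hunif,
    Measure.restrict_apply measurableSet_Iic, hinter, Real.volume_Icc, sub_zero,
    ENNReal.toReal_ofReal hp0]

lemma ProbabilityTheory.IndepFun.indicator_one_preimage {β γ : Type*} [MeasurableSpace β]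
    [MeasurableSpace γ] {Y : Ω → β} {Z : Ω → γ} (h : IndepFun Y Z μ) {s : Set β} {t : Set γ}
    (hs : MeasurableSet s) (ht : MeasurableSet t) :
    IndepFun ((Y ⁻¹' s).indicator (1 : Ω → ℝ)) ((Z ⁻¹' t).indicator (1 : Ω → ℝ)) μ :=
  h.comp (measurable_one.indicator hs) (measurable_one.indicator ht)

lemma ProbabilityTheory.iIndepFun.indepFun_of_succ {β : Type*} [MeasurableSpace β]
    {f : ℕ → Ω → β} (h : iIndepFun (fun i => f (i + 1)) μ) {i j : ℕ} (hi : i ≠ 0) (hj : j ≠ 0)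
    (hij : i ≠ j) :
    IndepFun (f i) (f j) μ := by
  obtain ⟨i, rfl⟩ := Nat.exists_eq_succ_of_ne_zero hi
  obtain ⟨j, rfl⟩ := Nat.exists_eq_succ_of_ne_zero hj
  exact h.indepFun (by omega)

variable [IsProbabilityMeasure μ]

lemma memLp_indicator_one {A : Set Ω} (hA : MeasurableSet A) (p : ENNReal) :
    MemLp (A.indicator (1 : Ω → ℝ)) p μ :=
  memLp_indicator_const p hA 1 (Or.inr (measure_ne_top μ A))

lemma variance_indicator_one_le {A : Set Ω} (hA : MeasurableSet A) :
    variance (A.indicator (1 : Ω → ℝ)) μ ≤ μ.real A := by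
  have hsq : A.indicator (1 : Ω → ℝ) ^ 2 = A.indicator 1 := by
    funext ω
    by_cases h : ω ∈ A <;> simp [h]
  rw [variance_eq_sub (memLp_indicator_one hA 2), hsq, integral_indicator_one hA]
  nlinarith [sq_nonneg (μ.real A)]

lemma integral_sum_indicator_one {ι : Type*} {A : ι → Set Ω} {s : Finset ι}
    (hA : ∀ i ∈ s, MeasurableSet (A i)) :
    μ[∑ i ∈ s, (A i).indicator (1 : Ω → ℝ)] = ∑ i ∈ s, μ.real (A i) := by
  simp only [Finset.sum_apply]
  rw [integral_finsetSum _ fun i hi => (memLp_indicator_one (hA i hi) 1).integrable le_rfl]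
  exact sum_congr rfl fun i hi => integral_indicator_one (hA i hi)

lemma variance_sum_indicator_one_le_integral {ι : Type*} {A : ι → Set Ω} {s : Finset ι}
    (hA : ∀ i ∈ s, MeasurableSet (A i))
    (hindep : (s : Set ι).Pairwise fun i j =>
      IndepFun ((A i).indicator (1 : Ω → ℝ)) ((A j).indicator (1 : Ω → ℝ)) μ) :
    variance (∑ i ∈ s, (A i).indicator (1 : Ω → ℝ)) μ
      ≤ μ[∑ i ∈ s, (A i).indicator (1 : Ω → ℝ)] := by
  rw [IndepFun.variance_sum (fun i hi => memLp_indicator_one (hA i hi) 2) hindep,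
    integral_sum_indicator_one hA]
  exact sum_le_sum fun i hi => variance_indicator_one_le (hA i hi)

end Indicators

theorem stmt4
    {Ω : Type*} [MeasurableSpace Ω] (μ : Measure Ω) [IsProbabilityMeasure μ]
    (U : ℕ → Ω → ℝ)
    (hUmeas : ∀ i, Measurable (U i))
    (hUindep : iIndepFun (fun i : ℕ => U (i + 1)) μ)
    (hUunif : ∀ i : ℕ, 1 ≤ i →
      Measure.map (U i) μ = MeasureTheory.volume.restrict (Set.Icc (0:ℝ) 1))
    (δ' : ℝ) (hδ' : δ' ∈ Set.Ioo (0:ℝ) 1)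
    (V : ℕ → Ω → ℝ)
    (hV : ∀ n ω, V n ω =
      ∑ i ∈ Finset.Icc (n - ⌊δ' * (n:ℝ)⌋₊ + 1) n,
        if U i ω ≤ (i:ℝ) ^ (-(1:ℝ)/2) then (1:ℝ) else 0) :
    ∀ ε : ℝ, 0 < ε →
      Tendsto
        (fun n : ℕ =>
          μ {ω | ε < |V n ω / Real.sqrt n - (2 - 2 * Real.sqrt (1 - δ'))|})
        atTop (𝓝 0) := by
  intro ε hε
  set a : ℕ → ℕ := fun n => n - ⌊δ' * n⌋₊
  set A : ℕ → Set Ω := fun i => U i ⁻¹' Set.Iic (√i)⁻¹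
  have hA : ∀ i, MeasurableSet (A i) := fun i => hUmeas i measurableSet_Iic
  have hVA : ∀ n, V n = ∑ i ∈ Ioc (a n) n, (A i).indicator 1 := fun n => by
    funext ω
    rw [hV, Finset.sum_apply, Icc_add_one_left_eq_Ioc]
    refine sum_congr rfl fun i _ => ?_
    simp only [rpow_neg_one_half_eq_inv_sqrt i.cast_nonneg, A, Set.indicator_apply,
      Set.mem_preimage, Set.mem_Iic, Pi.one_apply]
  have hμA : ∀ n, ∀ i ∈ Ioc (a n) n, μ.real (A i) = (√i)⁻¹ := fun n i hi => by
    have hi1 : 1 ≤ i := Nat.one_le_of_lt (mem_Ioc.1 hi).1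
    exact measureReal_preimage_Iic_of_map_eq_uniform (hUmeas i) (hUunif i hi1) (by positivity)
      (inv_le_one_of_one_le₀ (Real.one_le_sqrt.2 (by exact_mod_cast hi1)))
  have hmean : ∀ n, μ[V n] = ∑ i ∈ Ioc (a n) n, (√i)⁻¹ := fun n => by
    rw [hVA, integral_sum_indicator_one fun i _ => hA i]
    exact sum_congr rfl (hμA n)
  refine tendsto_measure_lt_abs_div_sub_of_variance_le_integral
    (fun n => hVA n ▸ memLp_finsetSum' _ fun i _ => memLp_indicator_one (hA i) 2)
    (Real.tendsto_sqrt_atTop.comp tendsto_natCast_atTop_atTop) ?_ (fun n => ?_) hε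
  · simpa only [hmean] using tendsto_sum_Ioc_inv_sqrt_div_sqrt (fun n => Nat.sub_le _ _)
      (tendsto_sub_floor_mul_div hδ'.1.le hδ'.2.le)
  · rw [hVA]
    refine variance_sum_indicator_one_le_integral (fun i _ => hA i) fun i hi j hj hij => ?_
    have hpos : ∀ k ∈ (Ioc (a n) n : Set ℕ), k ≠ 0 := fun k hk =>
      Nat.ne_zero_of_lt (mem_Ioc.1 hk).1
    exact (hUindep.indepFun_of_succ (hpos i hi) (hpos j hj) hij).indicator_one_preimage
      measurableSet_Iic measurableSet_Iic
end

section
/- Let $\{U_i\}_{i\ge 1}$ be i.i.d. uniform on $[0,1]$ and fix $\varepsilon \in (0,1)$. Let $k = \lceil \log^2 n \rceil$. Define $A_{n,k}$ as the number of indices $j$ among the first (at most $n$) inter-arrival gaps $\Delta N_j$ of the process of successes $\{U_i \le i^{-1/2}\}$ after time $n^\varepsilon$ that satisfy $\Delta N_j \le k$. Then $\mathbb{P}[A_{n,k} > n^{1-\varepsilon/4}] \le \left(\frac{3 e k}{2 n^{\varepsilon/4}}\right)^{n^{1-\varepsilon/4}}$, and in particular $\sum_n \mathbb{P}[A_{n,\lceil\log^2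 n\rceil} > n^{1-\varepsilon/4}] < \infty$. -/
/-
Call the times `m > c` with `U m ≤ m^(-1/2)` arrivals; they are independent events of
probability at most `p = c^(-1/2)`, and almost surely there are infinitely many of them (second
Borel–Cantelli lemma), so that `N j` is the `j`-th arrival. For a fixed set `S` of `a` indices, the
probability that every gap `ΔN_j`, `j ∈ S`, is at most `k` is at most `(k p)^a`: peel off the
largest `j ∈ S` and split according to the time `t` of the `(j-1)`-th arrival; the event that the
earlier gaps are short and `N_{j-1} = t` only depends on the arrivals up to time `t`, so it is
independent of each of the `k` events "arrival at `u`", `t < u ≤ t + k`. A union bound over the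
`choose n a` sets `S`, with `a = ⌊n^(1-ε/4)⌋ + 1` and `choose n a ≤ (e n / a)^a`, gives the tail
bound, which is at most `n^(-2)` for large `n`.
-/

open MeasureTheory ProbabilityTheory Filter Topology
open scoped Classical Finset ENNReal

namespace Renewal

variable {Ω : Type*} (E : ℕ → Set Ω) (c : ℕ)

-- The start time `c` counts as the `0`-th arrival, so that `Nat.nth (arrivals E c ω) j` is `N_j`.
def arrivals (ω : Ω) (m : ℕ) : Prop := m = c ∨ (c < m ∧ ω ∈ E m)

def arrivalAt (j t : ℕ) : Set Ω :=
  {ω | arrivals E c ω t ∧ Nat.count (arrivals E c ω) t = j}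

-- Empty for `j = 0`, where `j - 1` truncates.
def shortGap (k j : ℕ) : Set Ω :=
  ⋃ s, ⋃ u ∈ Finset.Ioc s (s + k), arrivalAt E c (j - 1) s ∩ arrivalAt E c j u

-- `σ(E 1, …, E t)`.
abbrev past (t : ℕ) : MeasurableSpace Ω :=
  MeasurableSpace.generateFrom {s | ∃ j < t, E (j + 1) = s}

variable {E c}

lemma le_of_arrivals {ω : Ω} {m : ℕ} (h : arrivals E c ω m) : c ≤ m := by
  rcases h with rfl | ⟨h, -⟩
  exacts [le_rfl, h.le]

lemma arrivalAt_eq_empty_of_lt {j t : ℕ} (ht : t < c) : arrivalAt E c j t = ∅ :=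
  Set.eq_empty_of_forall_notMem fun _ hω => (le_of_arrivals hω.1).not_gt ht

lemma pairwise_disjoint_arrivalAt (j : ℕ) :
    Pairwise (Function.onFun Disjoint (arrivalAt E c j)) :=
  fun _ _ hst => Set.disjoint_left.2 fun _ hs ht =>
    hst (Nat.count_injective hs.1 ht.1 (hs.2.trans ht.2.symm))

lemma disjoint_arrivalAt_of_lt {i j t u : ℕ} (hji : j ≤ i) (htu : t < u) :
    Disjoint (arrivalAt E c j u) (arrivalAt E c i t) :=
  Set.disjoint_left.2 fun _ hu ht => by
    have := Nat.count_strict_mono ht.1 htu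
    rw [hu.2, ht.2] at this
    omega

lemma mem_of_mem_arrivalAt_of_lt {ω : Ω} {i j s u : ℕ} (hs : ω ∈ arrivalAt E c i s) (hsu : s < u)
    (hu : ω ∈ arrivalAt E c j u) : ω ∈ E u := by
  rcases hu.1 with rfl | h
  · exact absurd (le_of_arrivals hs.1) hsu.not_ge
  · exact h.2

lemma nth_arrivals_eq {ω : Ω} (hinf : (Set.ofPred (arrivals E c ω)).Infinite) {g : ℕ → ℕ}
    (hg0 : g 0 = c) (hgs : ∀ j, g (j + 1) = sInf {m | g j < m ∧ ω ∈ E m}) (j : ℕ) :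
    g j = Nat.nth (arrivals E c ω) j := by
  induction j with
  | zero =>
    rw [hg0, Nat.nth_zero]
    exact le_antisymm (le_csInf ⟨c, Or.inl rfl⟩ fun m hm => le_of_arrivals hm)
      (Nat.sInf_le (Or.inl rfl))
  | succ j ih =>
    have hc : c ≤ g j := ih ▸ le_of_arrivals (Nat.nth_mem_of_infinite hinf j)
    rw [hgs, ← Nat.count_nth_succ_of_infinite hinf, Nat.nth_count_eq_sInf, ← ih]
    congr 1
    ext m
    simp only [Set.mem_ofPred_eq, arrivals]
    constructor
    · rintro ⟨hjm, hm⟩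
      exact ⟨Or.inr ⟨by omega, hm⟩, hjm⟩
    · rintro ⟨rfl | ⟨-, hm⟩, hjm⟩
      · omega
      · exact ⟨by omega, hm⟩

lemma mem_shortGap_of_nth_sub_le {ω : Ω} (hinf : (Set.ofPred (arrivals E c ω)).Infinite)
    {k j : ℕ} (hj : 1 ≤ j)
    (hgap : Nat.nth (arrivals E c ω) j - Nat.nth (arrivals E c ω) (j - 1) ≤ k) :
    ω ∈ shortGap E c k j := by
  have hlt := Nat.nth_strictMono hinf (show j - 1 < j by omega)
  refine Set.mem_iUnion₂.2 ⟨_, _, Set.mem_iUnion.2 ⟨Finset.mem_Ioc.2 ⟨hlt, by omega⟩, ?_, ?_⟩⟩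
  · exact ⟨Nat.nth_mem_of_infinite hinf _, Nat.count_nth_of_infinite hinf _⟩
  · exact ⟨Nat.nth_mem_of_infinite hinf _, Nat.count_nth_of_infinite hinf _⟩

lemma past_mono {s t : ℕ} (h : s ≤ t) : past E s ≤ past E t :=
  MeasurableSpace.generateFrom_mono fun _ ⟨j, hj, hE⟩ => ⟨j, by omega, hE⟩

lemma measurableSet_past_setOf_arrivals {m t : ℕ} (hm : m ≤ t) :
    MeasurableSet[past E t] {ω | arrivals E c ω m} := by
  by_cases hmc : m = c
  · simp [arrivals, hmc]
  by_cases hcm : c < m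
  · have : {ω | arrivals E c ω m} = E m := by ext; simp [arrivals, hmc, hcm]
    rw [this]
    exact MeasurableSpace.measurableSet_generateFrom
      ⟨m - 1, by omega, by rw [Nat.sub_add_cancel (by omega)]⟩
  · simp [arrivals, hmc, hcm]

lemma measurable_past_count (t : ℕ) :
    Measurable[past E t] fun ω => Nat.count (arrivals E c ω) t := by
  simp_rw [Nat.count_eq_card_filter_range, Finset.card_filter]
  exact Finset.measurable_sum _ fun m hm => Measurable.ite
    (measurableSet_past_setOf_arrivals (Finset.mem_range.1 hm).le) measurable_const measurable_const

lemma measurableSet_past_arrivalAt {j s t : ℕ} (hst : s ≤ t) :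
    MeasurableSet[past E t] (arrivalAt E c j s) :=
  (measurableSet_past_setOf_arrivals hst).inter
    (past_mono hst _ (measurable_past_count s (measurableSet_singleton j)))

lemma measurableSet_past_shortGap_inter_arrivalAt {k i j t : ℕ} (hji : j ≤ i) :
    MeasurableSet[past E t] (shortGap E c k j ∩ arrivalAt E c i t) := by
  simp only [shortGap, Set.iUnion_inter]
  refine MeasurableSet.iUnion fun s => Finset.measurableSet_biUnion _ fun u hu => ?_
  obtain ⟨hsu, -⟩ := Finset.mem_Ioc.1 hu
  rcases le_or_gt u t with hut | htu
  · exact ((measurableSet_past_arrivalAt (by omega)).inter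
      (measurableSet_past_arrivalAt hut)).inter (measurableSet_past_arrivalAt le_rfl)
  · rw [Set.inter_assoc, (disjoint_arrivalAt_of_lt hji htu).inter_eq, Set.inter_empty]
    exact (past E t).measurableSet_empty

lemma measurableSet_past_biInter_shortGap_inter_arrivalAt {k i t : ℕ} {S : Finset ℕ}
    (hS : ∀ j ∈ S, j ≤ i) :
    MeasurableSet[past E t] ((⋂ j ∈ S, shortGap E c k j) ∩ arrivalAt E c i t) := by
  have : (⋂ j ∈ S, shortGap E c k j) ∩ arrivalAt E c i t
      = (⋂ j ∈ S, shortGap E c k j ∩ arrivalAt E c i t) ∩ arrivalAt E c i t := by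
    ext ω
    simp only [Set.mem_inter_iff, Set.mem_iInter]
    exact ⟨fun ⟨hG, hD⟩ => ⟨fun j hj => ⟨hG j hj, hD⟩, hD⟩,
      fun ⟨hG, hD⟩ => ⟨fun j hj => (hG j hj).1, hD⟩⟩
  rw [this]
  exact (Finset.measurableSet_biInter _ fun j hj =>
    measurableSet_past_shortGap_inter_arrivalAt (hS j hj)).inter
    (measurableSet_past_arrivalAt le_rfl)

variable [MeasurableSpace Ω] {μ : Measure Ω}

lemma past_le (hEm : ∀ m, MeasurableSet (E m)) (t : ℕ) : past E t ≤ ‹MeasurableSpace Ω› :=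
  MeasurableSpace.generateFrom_le fun _ ⟨_, _, hj⟩ => hj ▸ hEm _

lemma measure_inter_eq_mul_of_measurableSet_past (hEm : ∀ m, MeasurableSet (E m))
    (hE : iIndepSet (fun i => E (i + 1)) μ) {t u : ℕ} (htu : t < u) {R : Set Ω}
    (hR : MeasurableSet[past E t] R) :
    μ (R ∩ E u) = μ R * μ (E u) := by
  obtain ⟨i, rfl⟩ : ∃ i, u = i + 1 := ⟨u - 1, by omega⟩
  have hind := (Indep_iff _ _ μ).1 (hE.indep_generateFrom_lt (fun i => hEm (i + 1)) i)
  rw [Set.inter_comm, mul_comm]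
  exact hind _ _ (MeasurableSpace.measurableSet_generateFrom rfl) (past_mono (by omega) R hR)

lemma measure_inter_shortGap_le (hEm : ∀ m, MeasurableSet (E m))
    (hE : iIndepSet (fun i => E (i + 1)) μ) {p : ℝ≥0∞} (hp : ∀ m, c < m → μ (E m) ≤ p)
    (k i : ℕ) {R : Set Ω} (hR : ∀ t, MeasurableSet[past E t] (R ∩ arrivalAt E c (i - 1) t)) :
    μ (R ∩ shortGap E c k i) ≤ μ R * (k * p) := by
  set Rt := fun t => R ∩ arrivalAt E c (i - 1) t
  have hcover : R ∩ shortGap E c k i ⊆ ⋃ t, ⋃ u ∈ Finset.Ioc t (t + k), Rt t ∩ E u := by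
    rintro ω ⟨hωR, hω⟩
    simp only [shortGap, Set.mem_iUnion] at hω
    obtain ⟨s, u, hu, hs, hu'⟩ := hω
    exact Set.mem_iUnion₂.2 ⟨s, u, Set.mem_iUnion.2 ⟨hu, ⟨hωR, hs⟩,
      mem_of_mem_arrivalAt_of_lt hs (Finset.mem_Ioc.1 hu).1 hu'⟩⟩
  have hstep : ∀ t, ∀ u ∈ Finset.Ioc t (t + k), μ (Rt t ∩ E u) ≤ μ (Rt t) * p := by
    intro t u hu
    obtain ⟨htu, -⟩ := Finset.mem_Ioc.1 hu
    rcases lt_or_ge t c with htc | hct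
    · simp [Rt, arrivalAt_eq_empty_of_lt htc]
    · rw [measure_inter_eq_mul_of_measurableSet_past hEm hE htu (hR t)]
      gcongr
      exact hp u (by omega)
  calc μ (R ∩ shortGap E c k i)
      ≤ ∑' t, ∑ u ∈ Finset.Ioc t (t + k), μ (Rt t ∩ E u) :=
        (measure_mono hcover).trans ((measure_iUnion_le _).trans
          (ENNReal.tsum_le_tsum fun t => measure_biUnion_finset_le _ _))
    _ ≤ ∑' t, μ (Rt t) * (k * p) := ENNReal.tsum_le_tsum fun t =>
        (Finset.sum_le_sum (hstep t)).trans_eq (by simp [mul_left_comm])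
    _ = μ (⋃ t, Rt t) * (k * p) := by
        rw [ENNReal.tsum_mul_right, measure_iUnion
          (fun s t hst => ((pairwise_disjoint_arrivalAt _ hst).mono Set.inter_subset_right
            Set.inter_subset_right)) fun t => past_le hEm t _ (hR t)]
    _ ≤ μ R * (k * p) := by gcongr; exact Set.iUnion_subset fun t => Set.inter_subset_left

theorem measure_biInter_shortGap_le (hEm : ∀ m, MeasurableSet (E m))
    (hE : iIndepSet (fun i => E (i + 1)) μ) {p : ℝ≥0∞} (hp : ∀ m, c < m → μ (E m) ≤ p)
    (k : ℕ) (S : Finset ℕ) :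
    μ (⋂ j ∈ S, shortGap E c k j) ≤ (k * p) ^ S.card := by
  induction S using Finset.induction_on_max with
  | empty => have := hE.isProbabilityMeasure; simp
  | insert i S hlt ih =>
    rw [Finset.set_biInter_insert, Set.inter_comm,
      Finset.card_insert_of_notMem fun h => (hlt i h).false, pow_succ]
    refine (measure_inter_shortGap_le hEm hE hp k i fun t =>
      measurableSet_past_biInter_shortGap_inter_arrivalAt fun j hj => ?_).trans (by gcongr)
    have := hlt j hj
    omega

lemma ae_infinite_arrivals (hEm : ∀ m, MeasurableSet (E m))
    (hE : iIndepSet (fun i => E (i + 1)) μ) (hdiv : ∑' i, μ (E (i + 1)) = ∞) :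
    ∀ᵐ ω ∂μ, (Set.ofPred (arrivals E c ω)).Infinite := by
  have := hE.isProbabilityMeasure
  have hlimsup : limsup (fun i => E (i + 1)) atTop ∈ ae μ :=
    mem_ae_iff.2 ((prob_compl_eq_zero_iff
      (MeasurableSet.measurableSet_limsup fun i => hEm (i + 1))).2
        (measure_limsup_eq_one (fun i => hEm (i + 1)) hE hdiv))
  filter_upwards [hlimsup] with ω hω
  rw [mem_limsup_iff_frequently_mem] at hω
  rw [← Nat.frequently_atTop_iff_infinite]
  exact (tendsto_add_atTop_nat 1).frequently ((hω.and_eventually (eventually_ge_atTop c)).mono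
    fun i ⟨hi, hci⟩ => Or.inr ⟨by omega, hi⟩)

theorem measure_le_card_shortGaps_le (hEm : ∀ m, MeasurableSet (E m))
    (hE : iIndepSet (fun i => E (i + 1)) μ) {p : ℝ≥0∞} (hp : ∀ m, c < m → μ (E m) ≤ p)
    (hinf : ∀ᵐ ω ∂μ, (Set.ofPred (arrivals E c ω)).Infinite) {g : ℕ → Ω → ℕ}
    (hg0 : ∀ ω, g 0 ω = c) (hgs : ∀ j ω, g (j + 1) ω = sInf {m | g j ω < m ∧ ω ∈ E m})
    (n k a : ℕ) :
    μ {ω | a ≤ #{j ∈ Finset.Icc 1 n | g j ω - g (j - 1) ω ≤ k}} ≤ n.choose a * (k * p) ^ a := by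
  have hcover : ∀ᵐ ω ∂μ, ω ∈ {ω | a ≤ #{j ∈ Finset.Icc 1 n | g j ω - g (j - 1) ω ≤ k}} →
      ω ∈ ⋃ S ∈ Finset.powersetCard a (Finset.Icc 1 n), ⋂ j ∈ S, shortGap E c k j := by
    filter_upwards [hinf] with ω hω ha
    obtain ⟨S, hS, rfl⟩ := Finset.exists_subset_card_eq ha
    refine Set.mem_iUnion₂.2 ⟨S, Finset.mem_powersetCard.2 ⟨hS.trans (Finset.filter_subset _ _),
      rfl⟩, Set.mem_iInter₂.2 fun j hj => ?_⟩
    obtain ⟨hj, hgap⟩ := Finset.mem_filter.1 (hS hj)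
    have hg := nth_arrivals_eq hω (g := fun j => g j ω) (hg0 ω) fun j => hgs j ω
    rw [hg, hg] at hgap
    exact mem_shortGap_of_nth_sub_le hω (Finset.mem_Icc.1 hj).1 hgap
  calc μ {ω | a ≤ #{j ∈ Finset.Icc 1 n | g j ω - g (j - 1) ω ≤ k}}
      ≤ μ (⋃ S ∈ Finset.powersetCard a (Finset.Icc 1 n), ⋂ j ∈ S, shortGap E c k j) :=
        measure_mono_ae hcover
    _ ≤ ∑ S ∈ Finset.powersetCard a (Finset.Icc 1 n), μ (⋂ j ∈ S, shortGap E c k j) :=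
        measure_biUnion_finset_le _ _
    _ ≤ ∑ S ∈ Finset.powersetCard a (Finset.Icc 1 n), (k * p) ^ a :=
        Finset.sum_le_sum fun S hS => (measure_biInter_shortGap_le hEm hE hp k S).trans_eq
          (by rw [(Finset.mem_powersetCard.1 hS).2])
    _ = n.choose a * (k * p) ^ a := by simp

end Renewal

lemma Nat.choose_le_exp_mul_div_pow (n a : ℕ) : (n.choose a : ℝ) ≤ (Real.exp 1 * n / a) ^ a := by
  rcases Nat.eq_zero_or_pos a with rfl | ha
  · simp
  have hfac : (a : ℝ) ^ a / a.factorial ≤ Real.exp 1 ^ a := by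
    simpa [← Real.exp_one_pow] using Real.pow_div_factorial_le_exp (a : ℝ) a.cast_nonneg a
  have ha' : (0 : ℝ) < a := by exact_mod_cast ha
  calc (n.choose a : ℝ) ≤ n ^ a / a.factorial := Nat.choose_le_pow_div a n
    _ = (n / a) ^ a * ((a : ℝ) ^ a / a.factorial) := by
        rw [mul_div_assoc', div_pow, div_mul_cancel₀ _ (pow_ne_zero _ ha'.ne')]
    _ ≤ (n / a) ^ a * Real.exp 1 ^ a := by gcongr
    _ = (Real.exp 1 * n / a) ^ a := by rw [← mul_pow]; ring

lemma choose_mul_pow_le_rpow {n a k c : ℕ} {ε : ℝ} (hn : 0 < n) (hk : 0 < k)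
    (hc : (n : ℝ) ^ ε ≤ c) (ha : (n : ℝ) ^ (1 - ε / 4) ≤ a)
    (hb : 3 * Real.exp 1 * k ≤ 2 * (n : ℝ) ^ (ε / 4)) :
    n.choose a * (k * (c : ℝ) ^ (-(1 : ℝ) / 2)) ^ a
      ≤ (3 * Real.exp 1 * k / (2 * (n : ℝ) ^ (ε / 4))) ^ ((n : ℝ) ^ (1 - ε / 4)) := by
  set b := 3 * Real.exp 1 * k / (2 * (n : ℝ) ^ (ε / 4))
  have hn' : (0 : ℝ) < n := by exact_mod_cast hn
  have hnε : (0 : ℝ) < (n : ℝ) ^ ε := by positivity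
  have hx : (0 : ℝ) < (n : ℝ) ^ (1 - ε / 4) := by positivity
  have hb0 : 0 < b := by positivity
  have hb1 : b ≤ 1 := (div_le_one (by positivity)).2 hb
  have hcn : (c : ℝ) ^ (-(1 : ℝ) / 2) ≤ (n : ℝ) ^ (-(ε / 2)) := by
    calc (c : ℝ) ^ (-(1 : ℝ) / 2) ≤ ((n : ℝ) ^ ε) ^ (-(1 : ℝ) / 2) :=
          Real.rpow_le_rpow_of_nonpos hnε hc (by norm_num)
      _ = (n : ℝ) ^ (-(ε / 2)) := by rw [← Real.rpow_mul hn'.le]; ring_nf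
  have hna : (n : ℝ) / a ≤ (n : ℝ) ^ (ε / 4) := by
    calc (n : ℝ) / a ≤ n / (n : ℝ) ^ (1 - ε / 4) := div_le_div_of_nonneg_left hn'.le hx ha
      _ = (n : ℝ) ^ (ε / 4) := by
        rw [div_eq_iff hx.ne', ← Real.rpow_add hn']; simp
  have hbase : Real.exp 1 * n * (k * (c : ℝ) ^ (-(1 : ℝ) / 2)) / a ≤ b := by
    calc Real.exp 1 * n * (k * (c : ℝ) ^ (-(1 : ℝ) / 2)) / a
        = Real.exp 1 * k * (c : ℝ) ^ (-(1 : ℝ) / 2) * (n / a) := by ring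
      _ ≤ Real.exp 1 * k * (n : ℝ) ^ (-(ε / 2)) * (n : ℝ) ^ (ε / 4) := by gcongr
      _ = Real.exp 1 * k / (n : ℝ) ^ (ε / 4) := by
        rw [mul_assoc, ← Real.rpow_add hn', show -(ε / 2) + ε / 4 = -(ε / 4) by ring,
          Real.rpow_neg hn'.le]
        ring
      _ ≤ b := by
        rw [div_le_div_iff₀ (by positivity) (by positivity)]
        have : 0 < Real.exp 1 * k * (n : ℝ) ^ (ε / 4) := by positivity
        linarith
  calc (n.choose a : ℝ) * (k * (c : ℝ) ^ (-(1 : ℝ) / 2)) ^ a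
      ≤ (Real.exp 1 * n / a) ^ a * (k * (c : ℝ) ^ (-(1 : ℝ) / 2)) ^ a := by
        gcongr; exact Nat.choose_le_exp_mul_div_pow n a
    _ = (Real.exp 1 * n * (k * (c : ℝ) ^ (-(1 : ℝ) / 2)) / a) ^ a := by rw [← mul_pow]; ring
    _ ≤ b ^ a := by gcongr
    _ = b ^ (a : ℝ) := (Real.rpow_natCast b a).symm
    _ ≤ b ^ ((n : ℝ) ^ (1 - ε / 4)) := Real.rpow_le_rpow_of_exponent_ge hb0 hb1 ha

lemma eventually_three_exp_mul_ceil_log_sq_le {δ : ℝ} (hδ : 0 < δ) :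
    ∀ᶠ n : ℕ in atTop, 3 * Real.exp 1 * (⌈Real.log n ^ 2⌉₊ : ℝ) ≤ 2 * (n : ℝ) ^ δ := by
  have hlo := (isLittleO_log_rpow_rpow_atTop 2 hδ).def (show 0 < 1 / (3 * Real.exp 1) by positivity)
  have hlog : ∀ᶠ x : ℝ in atTop, 1 ≤ Real.log x ^ 2 :=
    ((tendsto_pow_atTop two_ne_zero).comp Real.tendsto_log_atTop).eventually_ge_atTop 1
  refine (tendsto_natCast_atTop_atTop (R := ℝ)).eventually (p := fun x : ℝ =>
    3 * Real.exp 1 * (⌈Real.log x ^ 2⌉₊ : ℝ) ≤ 2 * x ^ δ) ?_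
  filter_upwards [hlo, hlog, eventually_ge_atTop 0] with x hlo hlog hx
  rw [Real.rpow_two, Real.norm_of_nonneg (by positivity),
    Real.norm_of_nonneg (by positivity)] at hlo
  have hceil := Nat.ceil_lt_add_one (zero_le_one.trans hlog)
  have hexp := Real.exp_pos 1
  calc 3 * Real.exp 1 * (⌈Real.log x ^ 2⌉₊ : ℝ) ≤ 2 * (3 * Real.exp 1 * Real.log x ^ 2) := by
        nlinarith
    _ ≤ 2 * x ^ δ := by
        rw [one_div_mul_eq_div, le_div_iff₀' (by positivity)] at hlo
        linarith

lemma rpow_le_natCast_rpow_neg_two {n : ℕ} {b x δ : ℝ} (hn : 1 ≤ n) (hb0 : 0 ≤ b)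
    (hb : b ≤ (n : ℝ) ^ (-δ)) (hx0 : 0 ≤ x) (hx : 2 ≤ δ * x) : b ^ x ≤ (n : ℝ) ^ (-2 : ℝ) := by
  have hn' : (1 : ℝ) ≤ n := by exact_mod_cast hn
  calc b ^ x ≤ ((n : ℝ) ^ (-δ)) ^ x := Real.rpow_le_rpow hb0 hb hx0
    _ = (n : ℝ) ^ (-(δ * x)) := by rw [← Real.rpow_mul (by positivity), neg_mul]
    _ ≤ (n : ℝ) ^ (-2 : ℝ) := Real.rpow_le_rpow_of_exponent_le hn' (by linarith)

lemma three_exp_mul_div_le_rpow_neg {n k : ℕ} {ε : ℝ} (hn : 0 < n)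
    (hk : 3 * Real.exp 1 * k ≤ 2 * (n : ℝ) ^ (ε / 8)) :
    3 * Real.exp 1 * k / (2 * (n : ℝ) ^ (ε / 4)) ≤ (n : ℝ) ^ (-(ε / 8)) := by
  have hn' : (0 : ℝ) < n := by exact_mod_cast hn
  rw [div_le_iff₀ (by positivity), mul_left_comm, ← Real.rpow_add hn',
    show -(ε / 8) + ε / 4 = ε / 8 by ring]
  exact hk

section Uniform

variable {Ω : Type*} [MeasurableSpace Ω] {μ : Measure Ω}

lemma measure_preimage_Iic_of_map_eq {X : Ω → ℝ} (hX : Measurable X)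
    (hmap : μ.map X = volume.restrict (Set.Icc (0 : ℝ) 1)) {r : ℝ} (hr1 : r ≤ 1) :
    μ (X ⁻¹' Set.Iic r) = ENNReal.ofReal r := by
  have hinter : Set.Iic r ∩ Set.Icc 0 1 = Set.Icc 0 r := by
    ext x
    simp only [Set.mem_inter_iff, Set.mem_Iic, Set.mem_Icc]
    exact ⟨fun ⟨h, h0, _⟩ => ⟨h0, h⟩, fun ⟨h0, h⟩ => ⟨h, h0, h.trans hr1⟩⟩
  rw [← Measure.map_apply hX measurableSet_Iic, hmap, Measure.restrict_apply measurableSet_Iic,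
    hinter, Real.volume_Icc, sub_zero]

def successEvent (U : ℕ → Ω → ℝ) (m : ℕ) : Set Ω := U m ⁻¹' Set.Iic ((m : ℝ) ^ (-(1 : ℝ) / 2))

variable {U : ℕ → Ω → ℝ}

lemma measurableSet_successEvent (hU : ∀ i, Measurable (U i)) (m : ℕ) :
    MeasurableSet (successEvent U m) :=
  hU m measurableSet_Iic

lemma measure_successEvent (hU : ∀ i, Measurable (U i))
    (hUunif : ∀ i : ℕ, 1 ≤ i → μ.map (U i) = volume.restrict (Set.Icc (0 : ℝ) 1))
    {m : ℕ} (hm : 1 ≤ m) : μ (successEvent U m) = ENNReal.ofReal ((m : ℝ) ^ (-(1 : ℝ) / 2)) :=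
  measure_preimage_Iic_of_map_eq (hU m) (hUunif m hm)
    (Real.rpow_le_one_of_one_le_of_nonpos (by exact_mod_cast hm) (by norm_num))

lemma iIndepSet_successEvent (hU : ∀ i, Measurable (U i))
    (hUindep : iIndepFun (fun i : ℕ => U (i + 1)) μ) :
    iIndepSet (fun i => successEvent U (i + 1)) μ :=
  (iIndepSet_iff_meas_biInter fun i => hU (i + 1) measurableSet_Iic).2 fun s =>
    hUindep.measure_inter_preimage_eq_mul s fun _ _ => measurableSet_Iic

lemma tsum_measure_successEvent (hU : ∀ i, Measurable (U i))
    (hUunif : ∀ i : ℕ, 1 ≤ i → μ.map (U i) = volume.restrict (Set.Icc (0 : ℝ) 1)) :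
    ∑' i, μ (successEvent U (i + 1)) = ∞ := by
  by_contra h
  have hsum := ENNReal.summable_toReal h
  simp_rw [measure_successEvent hU hUunif (Nat.le_add_left 1 _),
    ENNReal.toReal_ofReal (Real.rpow_nonneg (Nat.cast_nonneg _) _)] at hsum
  have := Real.summable_nat_rpow.1 ((summable_nat_add_iff 1).1 hsum)
  norm_num at this

theorem toReal_measure_card_gaps_gt_le (hU : ∀ i, Measurable (U i))
    (hUindep : iIndepFun (fun i : ℕ => U (i + 1)) μ)
    (hUunif : ∀ i : ℕ, 1 ≤ i → μ.map (U i) = volume.restrict (Set.Icc (0 : ℝ) 1))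
    {c : ℕ} (hc : 0 < c) {g : ℕ → Ω → ℕ} (hg0 : ∀ ω, g 0 ω = c)
    (hgs : ∀ j ω, g (j + 1) ω = sInf {m | g j ω < m ∧ U m ω ≤ (m : ℝ) ^ (-(1 : ℝ) / 2)})
    (n k : ℕ) {x : ℝ} (hx : 0 ≤ x) :
    (μ {ω | x < (#{j ∈ Finset.Icc 1 n | g j ω - g (j - 1) ω ≤ k} : ℝ)}).toReal
      ≤ n.choose (⌊x⌋₊ + 1) * (k * (c : ℝ) ^ (-(1 : ℝ) / 2)) ^ (⌊x⌋₊ + 1) := by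
  have hp : ∀ m, c < m → μ (successEvent U m) ≤ ENNReal.ofReal ((c : ℝ) ^ (-(1 : ℝ) / 2)) :=
    fun m hm => by
      rw [measure_successEvent hU hUunif (by omega)]
      exact ENNReal.ofReal_le_ofReal (Real.rpow_le_rpow_of_nonpos (by exact_mod_cast hc)
        (by exact_mod_cast hm.le) (by norm_num))
  have hE := iIndepSet_successEvent hU hUindep
  have hbound := Renewal.measure_le_card_shortGaps_le (measurableSet_successEvent hU) hE hp
    (Renewal.ae_infinite_arrivals (measurableSet_successEvent hU) hE
      (tsum_measure_successEvent hU hUunif)) hg0 hgs n k (⌊x⌋₊ + 1)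
  have hset : {ω | x < (#{j ∈ Finset.Icc 1 n | g j ω - g (j - 1) ω ≤ k} : ℝ)}
      = {ω | ⌊x⌋₊ + 1 ≤ #{j ∈ Finset.Icc 1 n | g j ω - g (j - 1) ω ≤ k}} := by
    ext ω
    simp [← Nat.floor_lt hx]
  rw [hset]
  refine (ENNReal.toReal_mono (by finiteness) hbound).trans_eq ?_
  simp [ENNReal.toReal_ofReal (Real.rpow_nonneg (Nat.cast_nonneg c) _)]

theorem toReal_measure_card_gaps_gt_le_rpow (hU : ∀ i, Measurable (U i))
    (hUindep : iIndepFun (fun i : ℕ => U (i + 1)) μ)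
    (hUunif : ∀ i : ℕ, 1 ≤ i → μ.map (U i) = volume.restrict (Set.Icc (0 : ℝ) 1))
    {ε : ℝ} {n k : ℕ} (hn : 0 < n) (hk : 0 < k)
    (hb : 3 * Real.exp 1 * k ≤ 2 * (n : ℝ) ^ (ε / 4)) {g : ℕ → Ω → ℕ}
    (hg0 : ∀ ω, g 0 ω = ⌈(n : ℝ) ^ ε⌉₊)
    (hgs : ∀ j ω, g (j + 1) ω = sInf {m | g j ω < m ∧ U m ω ≤ (m : ℝ) ^ (-(1 : ℝ) / 2)}) :
    (μ {ω | (n : ℝ) ^ (1 - ε / 4) < (#{j ∈ Finset.Icc 1 n | g j ω - g (j - 1) ω ≤ k} : ℝ)}).toReal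
      ≤ (3 * Real.exp 1 * k / (2 * (n : ℝ) ^ (ε / 4))) ^ ((n : ℝ) ^ (1 - ε / 4)) :=
  (toReal_measure_card_gaps_gt_le hU hUindep hUunif (Nat.ceil_pos.2 (by positivity)) hg0 hgs
    n k (by positivity)).trans (choose_mul_pow_le_rpow hn hk (Nat.le_ceil _)
      (by exact_mod_cast (Nat.lt_floor_add_one _).le) hb)

end Uniform

theorem stmt18_general
    {Ω : Type*} [MeasurableSpace Ω] (μ : Measure Ω)
    (U : ℕ → Ω → ℝ)
    (hUmeas : ∀ i, Measurable (U i))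
    (hUindep : iIndepFun (fun i : ℕ => U (i + 1)) μ)
    (hUunif : ∀ i : ℕ, 1 ≤ i →
      Measure.map (U i) μ = MeasureTheory.volume.restrict (Set.Icc (0:ℝ) 1))
    (ε : ℝ) (hε : ε ∈ Set.Ioo (0:ℝ) 1)
    -- the success times N n j after time n^ε, and the gap counts A n k
    (N : ℕ → ℕ → Ω → ℕ)
    (hN0 : ∀ n ω, N n 0 ω = ⌈(n:ℝ) ^ ε⌉₊)
    (hNs : ∀ n j ω, N n (j + 1) ω =
      sInf {m : ℕ | N n j ω < m ∧ U m ω ≤ (m:ℝ) ^ (-(1:ℝ)/2)})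
    (A : ℕ → ℕ → Ω → ℕ)
    (hA : ∀ n k ω, A n k ω =
      ((Finset.Icc 1 n).filter (fun j => N n j ω - N n (j - 1) ω ≤ k)).card) :
    (∃ n0 : ℕ, ∀ n : ℕ, n0 ≤ n →
      (μ {ω | (n:ℝ) ^ (1 - ε / 4) <
          (A n ⌈Real.log n ^ 2⌉₊ ω : ℝ)}).toReal
        ≤ (3 * Real.exp 1 * (⌈Real.log n ^ 2⌉₊ : ℝ) / (2 * (n:ℝ) ^ (ε / 4)))
            ^ ((n:ℝ) ^ (1 - ε / 4))) ∧
    Summable (fun n : ℕ =>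
      (μ {ω | (n:ℝ) ^ (1 - ε / 4) < (A n ⌈Real.log n ^ 2⌉₊ ω : ℝ)}).toReal) := by
  obtain ⟨hε0, hε1⟩ := hε
  have hbound : ∀ n : ℕ, 2 ≤ n →
      3 * Real.exp 1 * (⌈Real.log n ^ 2⌉₊ : ℝ) ≤ 2 * (n : ℝ) ^ (ε / 8) →
      (μ {ω | (n:ℝ) ^ (1 - ε / 4) < (A n ⌈Real.log n ^ 2⌉₊ ω : ℝ)}).toReal
        ≤ (3 * Real.exp 1 * (⌈Real.log n ^ 2⌉₊ : ℝ) / (2 * (n:ℝ) ^ (ε / 4)))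
            ^ ((n:ℝ) ^ (1 - ε / 4)) := by
    intro n hn hk
    have hlog : 0 < Real.log n := Real.log_pos (by exact_mod_cast hn)
    simp_rw [hA]
    refine toReal_measure_card_gaps_gt_le_rpow hUmeas hUindep hUunif (by omega)
      (Nat.ceil_pos.2 (by positivity)) (hk.trans ?_) (hN0 n) (hNs n)
    gcongr
    · exact_mod_cast (by omega : 1 ≤ n)
    · linarith
  have hev : ∀ᶠ n : ℕ in atTop, 2 ≤ n ∧
      3 * Real.exp 1 * (⌈Real.log n ^ 2⌉₊ : ℝ) ≤ 2 * (n : ℝ) ^ (ε / 8) ∧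
      2 ≤ ε / 8 * (n : ℝ) ^ (1 - ε / 4) :=
    (eventually_ge_atTop 2).and ((eventually_three_exp_mul_ceil_log_sq_le (by positivity)).and
      ((((tendsto_rpow_atTop (by linarith)).comp tendsto_natCast_atTop_atTop).const_mul_atTop
        (by positivity)).eventually_ge_atTop 2))
  obtain ⟨n0, hn0⟩ := eventually_atTop.1 hev
  refine ⟨⟨n0, fun n hn => hbound n (hn0 n hn).1 (hn0 n hn).2.1⟩,
    Summable.of_norm_bounded_eventually_nat
      (Real.summable_nat_rpow.2 (by norm_num : (-2 : ℝ) < -1)) ?_⟩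
  filter_upwards [hev] with n ⟨hn, hk, hx⟩
  rw [Real.norm_of_nonneg ENNReal.toReal_nonneg]
  exact (hbound n hn hk).trans (rpow_le_natCast_rpow_neg_two (by omega) (by positivity)
    (three_exp_mul_div_le_rpow_neg (by omega) hk) (by positivity) hx)

theorem stmt18
    {Ω : Type*} [MeasurableSpace Ω] (μ : Measure Ω) [IsProbabilityMeasure μ]
    (U : ℕ → Ω → ℝ)
    (hUmeas : ∀ i, Measurable (U i))
    (hUindep : iIndepFun (fun i : ℕ => U (i + 1)) μ)
    (hUunif : ∀ i : ℕ, 1 ≤ i →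
      Measure.map (U i) μ = MeasureTheory.volume.restrict (Set.Icc (0:ℝ) 1))
    (ε : ℝ) (hε : ε ∈ Set.Ioo (0:ℝ) 1)
    -- the success times N n j after time n^ε, and the gap counts A n k
    (N : ℕ → ℕ → Ω → ℕ)
    (hN0 : ∀ n ω, N n 0 ω = ⌈(n:ℝ) ^ ε⌉₊)
    (hNs : ∀ n j ω, N n (j + 1) ω =
      sInf {m : ℕ | N n j ω < m ∧ U m ω ≤ (m:ℝ) ^ (-(1:ℝ)/2)})
    (A : ℕ → ℕ → Ω → ℕ)
    (hA : ∀ n k ω, A n k ω =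
      ((Finset.Icc 1 n).filter (fun j => N n j ω - N n (j - 1) ω ≤ k)).card) :
    (∃ n0 : ℕ, ∀ n : ℕ, n0 ≤ n →
      (μ {ω | (n:ℝ) ^ (1 - ε / 4) <
          (A n ⌈Real.log n ^ 2⌉₊ ω : ℝ)}).toReal
        ≤ (3 * Real.exp 1 * (⌈Real.log n ^ 2⌉₊ : ℝ) / (2 * (n:ℝ) ^ (ε / 4)))
            ^ ((n:ℝ) ^ (1 - ε / 4))) ∧
    Summable (fun n : ℕ =>
      (μ {ω | (n:ℝ) ^ (1 - ε / 4) < (A n ⌈Real.log n ^ 2⌉₊ ω : ℝ)}).toReal) :=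
  stmt18_general μ U hUmeas hUindep hUunif ε hε N hN0 hNs A hA
end
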